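/- arXiv:1401.1156 — 2 statements merged into one kernel-verified Lean document; each statement's English description precedes it below -/
import Mathlib

section
/- Let U be a topological space, α < β index sets (with α embedded in β), define I_k on subsets of U^α and on subsets of U^β as the k-th interior operator induced by the topology on U. Let f : P(U^α) → P(U^β) be defined by f(X) = { s ∈ U^β : s↾α ∈ X }. Then f(I_k(X)) = I_k(f(X)) for all X ⊆ U^α and k ∈ α. -/
/-- The `k`-th interior operator on subsets of `ι → U` induced by a topology on `U`. -/
def intOp {ι U : Type*} [DecidableEq ι] [TopologicalSpace U]
    (k : ι) (X : Set (ι → U)) : Set (ι → U) :=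
  {s | s k ∈ interior {a : U | Function.update s k a ∈ X}}

/- Restricting `update s (e k) a` along the injection `e` gives `update (s ∘ e) k a`, so both
sides take the interior of the same set of values `a`. -/
theorem preimage_comp_intOp {ι κ U : Type*} [DecidableEq ι] [DecidableEq κ] [TopologicalSpace U]
    {e : ι → κ} (he : Function.Injective e) (k : ι) (X : Set (ι → U)) :
    (fun s : κ → U => s ∘ e) ⁻¹' intOp k X = intOp (e k) ((fun s : κ → U => s ∘ e) ⁻¹' X) := by
  ext s
  simp only [intOp, Set.mem_preimage, Set.mem_ofPred_eq, Function.comp_apply,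
    Function.update_comp_eq_of_injective s he]

/-- The natural (neat) embedding `f(X) = { s : β → U | s↾α ∈ X }`, along an
embedding `e : α ↪ β` of index sets, commutes with the interior operators:
`f(I_k X) = I_{e k}(f X)`. -/
theorem stmt_10 {α β U : Type*} [DecidableEq α] [DecidableEq β] [TopologicalSpace U]
    (e : α ↪ β) (k : α) (X : Set (α → U)) :
    {s : β → U | (fun i => s (e i)) ∈ intOp k X} =
      intOp (e k) {s : β → U | (fun i => s (e i)) ∈ X} :=
  preimage_comp_intOp e.injective k X
end

section
/- Let U be a topological space, α an infinite index set, p ∈ U^α, and let W = { s ∈ U^α : s(i) ≠ p(i) for only finitely many i } be the weak space determined by p. For k ∈ α define I_k(X) = { s ∈ W : s(k) ∈ int { a ∈ U : s[k↦a] ∈ X } } for X ⊆ W. Then I_k is an interior operator on P(W): it satisfies I_k(X) ⊆ X, I_k(X ∩ Y) = I_k(X) ∩ I_k(Y), I_k(X) ⊆ I_k(I_k(X)), and I_k(W) = W. -/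
/-- The weak space of dimension `α` with base `U` determined by `p`: all sequences
differing from `p` in only finitely many coordinates. -/
def weakSpace {α U : Type*} (p : α → U) : Set (α → U) :=
  {s | {i : α | s i ≠ p i}.Finite}

/-- The `k`-th interior operator on subsets of the weak space determined by `p`. -/
def intOpW {α U : Type*} [DecidableEq α] [TopologicalSpace U] (p : α → U)
    (k : α) (X : Set (α → U)) : Set (α → U) :=
  {s | s ∈ weakSpace p ∧ s k ∈ interior {a : U | Function.update s k a ∈ X}}

section WeakSpace

variable {α U : Type*} [DecidableEq α] {p s : α → U}

lemma update_mem_weakSpace (hs : s ∈ weakSpace p) (k : α) (a : U) :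
    Function.update s k a ∈ weakSpace p := by
  refine (hs.union (Set.finite_singleton k)).subset fun i hi => ?_
  by_cases hik : i = k
  · exact Or.inr hik
  · exact Or.inl (by simpa [Function.update_of_ne hik] using hi)

variable [TopologicalSpace U] (k : α) (X Y : Set (α → U))

lemma intOpW_subset : intOpW p k X ⊆ X := fun s hs => by
  simpa using interior_subset hs.2

lemma intOpW_inter : intOpW p k (X ∩ Y) = intOpW p k X ∩ intOpW p k Y := by
  ext s
  change s ∈ weakSpace p ∧ s k ∈ interior
      (Function.update s k ⁻¹' X ∩ Function.update s k ⁻¹' Y) ↔ _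
  rw [interior_inter]
  exact ⟨fun ⟨hs, hX, hY⟩ => ⟨⟨hs, hX⟩, hs, hY⟩, fun ⟨⟨hs, hX⟩, _, hY⟩ => ⟨hs, hX, hY⟩⟩

lemma update_preimage_intOpW (hs : s ∈ weakSpace p) :
    Function.update s k ⁻¹' intOpW p k X = interior (Function.update s k ⁻¹' X) := by
  ext a
  simp only [Set.mem_preimage, intOpW, Set.mem_ofPred_eq, Function.update_idem,
    Function.update_self, update_mem_weakSpace hs k a, true_and]
  rfl

lemma intOpW_intOpW : intOpW p k (intOpW p k X) = intOpW p k X := by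
  ext s
  refine ⟨fun hs => intOpW_subset k _ hs, fun hs => ⟨hs.1, ?_⟩⟩
  change s k ∈ interior (Function.update s k ⁻¹' intOpW p k X)
  rw [update_preimage_intOpW k X hs.1, interior_interior]
  exact hs.2

lemma intOpW_weakSpace : intOpW p k (weakSpace p) = weakSpace p := by
  refine (intOpW_subset k _).antisymm fun s hs => ⟨hs, ?_⟩
  have : Function.update s k ⁻¹' weakSpace p = Set.univ :=
    Set.eq_univ_of_forall (update_mem_weakSpace hs k)
  change s k ∈ interior (Function.update s k ⁻¹' weakSpace p)
  simp [this]

end WeakSpace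

theorem stmt_15_general {α U : Type*} [DecidableEq α] [TopologicalSpace U]
    (p : α → U) (k : α) (X Y : Set (α → U)) :
    intOpW p k X ⊆ X ∧
    intOpW p k (X ∩ Y) = intOpW p k X ∩ intOpW p k Y ∧
    intOpW p k X ⊆ intOpW p k (intOpW p k X) ∧
    intOpW p k (weakSpace p) = weakSpace p :=
  ⟨intOpW_subset k X, intOpW_inter k X Y, (intOpW_intOpW k X).ge, intOpW_weakSpace k⟩

/-- On a weak space over an infinite index set, `I_k` is an interior operator:
decreasing, meet-preserving, idempotent-increasing, and unital. -/
theorem stmt_15 {α U : Type*} [DecidableEq α] [Infinite α] [TopologicalSpace U]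
    (p : α → U) (k : α) (X Y : Set (α → U))
    (hX : X ⊆ weakSpace p) (hY : Y ⊆ weakSpace p) :
    intOpW p k X ⊆ X ∧
    intOpW p k (X ∩ Y) = intOpW p k X ∩ intOpW p k Y ∧
    intOpW p k X ⊆ intOpW p k (intOpW p k X) ∧
    intOpW p k (weakSpace p) = weakSpace p :=
  stmt_15_general p k X Y
end
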